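/- If √f = [a₀; overline(a₁, …, aₙ, 2a₀)], then Bₙ(f − a₀²) = A_{n−1} + a₀B_{n−1}, where Aₖ/Bₖ are the convergents of √f. -/

import Mathlib

/-- The pair `(rₖ, sₖ)` of the continued fraction algorithm for `√f`:
`r₀ = 0`, `s₀ = 1`, `r_{k+1} = aₖ sₖ − rₖ`, `s_{k+1} = (f − r_{k+1}²)/sₖ`,
where `aₖ = ⌊(√f + rₖ)/sₖ⌋ = ⌊(⌊√f⌋ + rₖ)/sₖ⌋`. -/
def cfRS (f : ℕ) : ℕ → ℤ × ℤ
  | 0 => (0, 1)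
  | k + 1 =>
    let p := cfRS f k
    let a := Int.fdiv ((Nat.sqrt f : ℤ) + p.1) p.2
    let r' := a * p.2 - p.1
    (r', Int.fdiv ((f : ℤ) - r' ^ 2) p.2)

/-- The `k`-th partial quotient `aₖ` of the continued fraction of `√f`. -/
def cfA (f : ℕ) (k : ℕ) : ℤ :=
  Int.fdiv ((Nat.sqrt f : ℤ) + (cfRS f k).1) (cfRS f k).2

/-- Numerators of the convergents of `√f`, shifted by 2:
`cfNum f (k+2) = Aₖ`, with `A₋₂ = 0`, `A₋₁ = 1`. -/
def cfNum (f : ℕ) : ℕ → ℤ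
  | 0 => 0
  | 1 => 1
  | k + 2 => cfA f k * cfNum f (k + 1) + cfNum f k

/-- Denominators of the convergents of `√f`, shifted by 2:
`cfDen f (k+2) = Bₖ`, with `B₋₂ = 1`, `B₋₁ = 0`. -/
def cfDen (f : ℕ) : ℕ → ℤ
  | 0 => 1
  | 1 => 0
  | k + 2 => cfA f k * cfDen f (k + 1) + cfDen f k

/-- `p` is a period of the (eventually periodic) partial quotient sequence of `√f`. -/
def CFIsPeriod (f p : ℕ) : Prop :=
  0 < p ∧ ∀ k, 1 ≤ k → cfA f (k + p) = cfA f k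

/-- `p` is the (minimal) period of the continued fraction expansion of `√f`. -/
def CFPeriod (f p : ℕ) : Prop :=
  CFIsPeriod f p ∧ ∀ q, CFIsPeriod f q → p ≤ q

/-- `(c, h)` is the fundamental (smallest positive) solution of `c² − f h² = 1`. -/
def IsFundamentalPell (f : ℕ) (c h : ℤ) : Prop :=
  0 < c ∧ 0 < h ∧ c ^ 2 - (f : ℤ) * h ^ 2 = 1 ∧
    ∀ c' h' : ℤ, 0 < c' → 0 < h' → c' ^ 2 - (f : ℤ) * h' ^ 2 = 1 → c ≤ c'

/-!
The complete quotients `ξₖ = (√f + rₖ) / sₖ` of the algorithm are reduced quadratic irrationals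
with `ξₖ = aₖ + 1 / ξₖ₊₁`, so `ξ₁` is the value of the continued fraction `[a₁; a₂, …]`, and the
periodicity of the partial quotients gives `ξₙ₊₂ = ξ₁`. Since `√f` is irrational this means
`(rₙ₊₂, sₙ₊₂) = (r₁, s₁) = (a₀, f - a₀²)`; then `sₙ₊₂ sₙ₊₁ = f - rₙ₊₂²` and
`rₙ₊₂ = aₙ₊₁ sₙ₊₁ - rₙ₊₁ = 2 a₀ sₙ₊₁ - rₙ₊₁` force `sₙ₊₁ = 1` and `rₙ₊₁ = a₀`. The identity is
then read off from `√f = (Aₙ ξₙ₊₁ + Aₙ₋₁) / (Bₙ ξₙ₊₁ + Bₙ₋₁)`.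
-/

namespace Int

variable {K : Type*} [Field K] [LinearOrder K] [IsStrictOrderedRing K] [FloorRing K]

theorem floor_intCast_add_inv {m : ℤ} {y : K} (hy : 1 < y) : ⌊(m : K) + y⁻¹⌋ = m := by
  rw [floor_intCast_add, add_eq_left, floor_eq_zero_iff]
  exact ⟨inv_nonneg.2 (zero_le_one.trans hy.le), inv_lt_one_of_one_lt₀ hy⟩

theorem fract_intCast_add_inv {m : ℤ} {y : K} (hy : 1 < y) : fract ((m : K) + y⁻¹) = y⁻¹ := by
  rw [fract_intCast_add, fract_eq_self]
  exact ⟨inv_nonneg.2 (zero_le_one.trans hy.le), inv_lt_one_of_one_lt₀ hy⟩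

end Int

namespace GenContFract

variable {K : Type*} [Field K] [LinearOrder K] [IsStrictOrderedRing K] [FloorRing K]
  {ξ η : ℕ → K} {a : ℕ → ℤ}

theorem IntFractPair.stream_eq_of_eq_add_inv
    (hrec : ∀ k, ξ k = a k + (ξ (k + 1))⁻¹) (hgt : ∀ k, 1 < ξ (k + 1)) (n : ℕ) :
    IntFractPair.stream (ξ 0) n = some (IntFractPair.of (ξ n)) := by
  induction n generalizing ξ a with
  | zero => rfl
  | succ n ih =>
    have hfract : Int.fract (ξ 0) = (ξ 1)⁻¹ := hrec 0 ▸ Int.fract_intCast_add_inv (hgt 0)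
    rw [IntFractPair.stream_succ (hfract ▸ inv_ne_zero (zero_lt_one.trans (hgt 0)).ne'),
      hfract, inv_inv]
    exact ih (fun k => hrec (k + 1)) (fun k => hgt (k + 1))

theorem of_eq_of_eq_add_inv
    (hξ : ∀ k, ξ k = a k + (ξ (k + 1))⁻¹) (hξgt : ∀ k, 1 < ξ (k + 1))
    (hη : ∀ k, η k = a k + (η (k + 1))⁻¹) (hηgt : ∀ k, 1 < η (k + 1)) :
    GenContFract.of (ξ 0) = GenContFract.of (η 0) := by
  have hfloor : ∀ {ζ : ℕ → K}, (∀ k, ζ k = a k + (ζ (k + 1))⁻¹) → (∀ k, 1 < ζ (k + 1)) →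
      ∀ k, ⌊ζ k⌋ = a k := fun hrec hgt k => hrec k ▸ Int.floor_intCast_add_inv (hgt k)
  ext1
  · simp only [of_h_eq_floor, hfloor hξ hξgt, hfloor hη hηgt]
  · refine Stream'.Seq.ext fun n => ?_
    rw [get?_of_eq_some_of_succ_get?_intFractPair_stream
        (IntFractPair.stream_eq_of_eq_add_inv hξ hξgt (n + 1)),
      get?_of_eq_some_of_succ_get?_intFractPair_stream
        (IntFractPair.stream_eq_of_eq_add_inv hη hηgt (n + 1))]
    simp only [IntFractPair.of, hfloor hξ hξgt, hfloor hη hηgt]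

theorem eq_of_eq_add_inv [Archimedean K] [TopologicalSpace K] [OrderTopology K]
    (hξ : ∀ k, ξ k = a k + (ξ (k + 1))⁻¹) (hξgt : ∀ k, 1 < ξ (k + 1))
    (hη : ∀ k, η k = a k + (η (k + 1))⁻¹) (hηgt : ∀ k, 1 < η (k + 1)) :
    ξ 0 = η 0 :=
  tendsto_nhds_unique (of_convergence (ξ 0))
    (of_eq_of_eq_add_inv hξ hξgt hη hηgt ▸ of_convergence (η 0))

end GenContFract

theorem Irrational.eq_of_add_intCast_div_eq {x : ℝ} (hx : Irrational x) {r s r' s' : ℤ}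
    (hs : s ≠ 0) (hs' : s' ≠ 0) (h : (x + r) / s = (x + r') / s') : r = r' ∧ s = s' := by
  rw [div_eq_div_iff (Int.cast_ne_zero.2 hs) (Int.cast_ne_zero.2 hs')] at h
  have hss : s = s' := by
    by_contra hne
    refine (hx.mul_intCast (sub_ne_zero.2 (Ne.symm hne))).ne_int (r' * s - r * s') ?_
    push_cast
    linear_combination h
  subst hss
  refine ⟨?_, rfl⟩
  exact_mod_cast add_left_cancel (mul_right_cancel₀ (Int.cast_ne_zero.2 hs) h)

/-- With `a₀ = ⌊√f⌋`, this says that `(√f + r) / s` is reduced: it exceeds `1` and its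
conjugate `(r - √f) / s` lies in `(-1, 0)`. -/
def IsReducedPair (a₀ r s : ℤ) : Prop :=
  r ≤ a₀ ∧ a₀ < r + s ∧ s ≤ a₀ + r

theorem IsReducedPair.next {a₀ f r s a r' s' : ℤ} (hlo : a₀ ^ 2 < f) (hhi : f < (a₀ + 1) ^ 2)
    (h : IsReducedPair a₀ r s) (ha : s * a ≤ a₀ + r) (ha' : a₀ + r < s * a + s)
    (hr' : r' = a * s - r) (hs' : s' * s = f - r' ^ 2) : IsReducedPair a₀ r' s' := by
  obtain ⟨hr, hrs, hsr⟩ := h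
  have hs : 0 < s := by linarith
  have ha₁ : 1 ≤ a := by nlinarith
  have hr'_le : r' ≤ a₀ := by linarith [mul_comm a s]
  have hs_gt : a₀ - r' < s := by linarith [mul_comm a s]
  have hs_le : s ≤ a₀ + r' := by nlinarith
  refine ⟨hr'_le, ?_, ?_⟩
  · by_contra! hle
    nlinarith [mul_le_mul_of_nonneg_right hle hs.le,
      mul_le_mul_of_nonneg_left hs_le (by linarith : 0 ≤ a₀ - r')]
  · by_contra! hlt
    nlinarith [mul_le_mul_of_nonneg_left (by linarith : a₀ - r' + 1 ≤ s)
      (by linarith : 0 ≤ a₀ + r' + 1)]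

theorem Int.fdiv_mul_eq_of_mul_eq {f r s s₀ : ℤ} (a : ℤ) (hs : s ≠ 0)
    (h : s * s₀ = f - r ^ 2) :
    (f - (a * s - r) ^ 2).fdiv s * s = f - (a * s - r) ^ 2 := by
  rw [show f - (a * s - r) ^ 2 = s * (s₀ - a ^ 2 * s + 2 * a * r) by linear_combination -h,
    Int.mul_fdiv_cancel_left _ hs]
  ring

theorem natSqrt_sq_lt {f : ℕ} (hns : ¬ IsSquare f) : (Nat.sqrt f : ℤ) ^ 2 < f := by
  have hle : Nat.sqrt f * Nat.sqrt f ≤ f := Nat.sqrt_le f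
  have hne : Nat.sqrt f * Nat.sqrt f ≠ f := fun h => hns ⟨_, h.symm⟩
  exact_mod_cast (sq (Nat.sqrt f)).symm ▸ lt_of_le_of_ne hle hne

theorem lt_natSqrt_add_one_sq (f : ℕ) : (f : ℤ) < (Nat.sqrt f + 1) ^ 2 := by
  exact_mod_cast Nat.lt_succ_sqrt' f

theorem natSqrt_lt_sqrt {f : ℕ} (hns : ¬ IsSquare f) : (Nat.sqrt f : ℝ) < √f := by
  rw [Real.lt_sqrt (Nat.cast_nonneg _)]
  exact_mod_cast natSqrt_sq_lt hns

theorem cfRS_succ_fst (f k : ℕ) :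
    (cfRS f (k + 1)).1 = cfA f k * (cfRS f k).2 - (cfRS f k).1 := rfl

theorem cfRS_succ_snd (f k : ℕ) :
    (cfRS f (k + 1)).2 = ((f : ℤ) - (cfRS f (k + 1)).1 ^ 2).fdiv (cfRS f k).2 := rfl

theorem cfA_zero (f : ℕ) : cfA f 0 = Nat.sqrt f := by
  simp [cfA, cfRS]

theorem cfRS_one (f : ℕ) : cfRS f 1 = ((Nat.sqrt f : ℤ), f - (Nat.sqrt f : ℤ) ^ 2) := by
  simp [cfRS]

theorem isReducedPair_cfRS_succ {f : ℕ} (hns : ¬ IsSquare f) (k : ℕ) :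
    IsReducedPair (Nat.sqrt f) (cfRS f (k + 1)).1 (cfRS f (k + 1)).2 ∧
      (cfRS f (k + 1)).2 * (cfRS f k).2 = f - (cfRS f (k + 1)).1 ^ 2 := by
  have hlo := natSqrt_sq_lt hns
  have hhi := lt_natSqrt_add_one_sq f
  induction k with
  | zero =>
    rw [zero_add, cfRS_one]
    exact ⟨⟨le_rfl, by linarith, by nlinarith⟩, by simp [cfRS]⟩
  | succ k ih =>
    obtain ⟨hred, hmul⟩ := ih
    have hs : 0 < (cfRS f (k + 1)).2 := by linarith [hred.1, hred.2.1]
    have hmul' := Int.fdiv_mul_eq_of_mul_eq (cfA f (k + 1)) hs.ne' hmul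
    rw [← cfRS_succ_fst, ← cfRS_succ_snd] at hmul'
    refine ⟨hred.next hlo hhi ?_ ?_ (cfRS_succ_fst f (k + 1)) hmul', hmul'⟩
    · rw [cfA, Int.fdiv_eq_ediv_of_nonneg _ hs.le]
      exact Int.mul_ediv_self_le hs.ne'
    · rw [cfA, Int.fdiv_eq_ediv_of_nonneg _ hs.le]
      exact Int.lt_mul_ediv_self_add hs

theorem cfRS_snd_pos {f : ℕ} (hns : ¬ IsSquare f) : ∀ k, 0 < (cfRS f k).2
  | 0 => one_pos
  | k + 1 => by
    obtain ⟨⟨hr, hrs, -⟩, -⟩ := isReducedPair_cfRS_succ hns k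
    linarith

theorem cfRS_snd_succ_mul {f : ℕ} (hns : ¬ IsSquare f) (k : ℕ) :
    (cfRS f (k + 1)).2 * (cfRS f k).2 = f - (cfRS f (k + 1)).1 ^ 2 :=
  (isReducedPair_cfRS_succ hns k).2

/-- The rational and irrational parts of `√f = (Aₖ₋₁ ξₖ + Aₖ₋₂) / (Bₖ₋₁ ξₖ + Bₖ₋₂)`,
where `ξₖ = (√f + rₖ) / sₖ`. -/
theorem cfNum_cfDen_succ {f : ℕ} (hns : ¬ IsSquare f) (k : ℕ) :
    cfNum f (k + 1) = (cfRS f k).1 * cfDen f (k + 1) + (cfRS f k).2 * cfDen f k ∧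
      f * cfDen f (k + 1) = (cfRS f k).1 * cfNum f (k + 1) + (cfRS f k).2 * cfNum f k := by
  induction k with
  | zero => simp [cfNum, cfDen, cfRS]
  | succ k ih =>
    obtain ⟨hA, hB⟩ := ih
    have hs := (cfRS_snd_pos hns k).ne'
    have hr' := cfRS_succ_fst f k
    have hs' := cfRS_snd_succ_mul hns k
    have eA : cfNum f (k + 2) = cfA f k * cfNum f (k + 1) + cfNum f k := rfl
    have eB : cfDen f (k + 2) = cfA f k * cfDen f (k + 1) + cfDen f k := rfl
    rw [eA, eB]
    set r' := (cfRS f (k + 1)).1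
    constructor
    · refine mul_left_cancel₀ hs ?_
      linear_combination r' * hA - hB - cfDen f (k + 1) * hs' +
        (r' * cfDen f (k + 1) - cfNum f (k + 1)) * hr'
    · refine mul_left_cancel₀ hs ?_
      linear_combination -(f : ℤ) * hA + r' * hB - cfNum f (k + 1) * hs' +
        (r' * cfNum f (k + 1) - f * cfDen f (k + 1)) * hr'

noncomputable def cfCompleteQuot (f k : ℕ) : ℝ :=
  (√f + (cfRS f k).1) / (cfRS f k).2

theorem one_lt_cfCompleteQuot_succ {f : ℕ} (hns : ¬ IsSquare f) (k : ℕ) :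
    1 < cfCompleteQuot f (k + 1) := by
  obtain ⟨⟨-, -, hsr⟩, -⟩ := isReducedPair_cfRS_succ hns k
  have hs : (0 : ℝ) < (cfRS f (k + 1)).2 := by exact_mod_cast cfRS_snd_pos hns (k + 1)
  have hsr' : ((cfRS f (k + 1)).2 : ℝ) ≤ Nat.sqrt f + (cfRS f (k + 1)).1 := by
    exact_mod_cast hsr
  rw [cfCompleteQuot, one_lt_div hs]
  linarith [natSqrt_lt_sqrt hns]

theorem cfCompleteQuot_eq_add_inv {f : ℕ} (hns : ¬ IsSquare f) (k : ℕ) :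
    cfCompleteQuot f k = cfA f k + (cfCompleteQuot f (k + 1))⁻¹ := by
  have hs : (0 : ℝ) < (cfRS f k).2 := by exact_mod_cast cfRS_snd_pos hns k
  have hs' : (0 : ℝ) < (cfRS f (k + 1)).2 := by exact_mod_cast cfRS_snd_pos hns (k + 1)
  have hx : (0 : ℝ) < √f + (cfRS f (k + 1)).1 := by
    have h := one_lt_cfCompleteQuot_succ hns k
    rw [cfCompleteQuot, one_lt_div hs'] at h
    linarith
  have hr' : ((cfRS f (k + 1)).1 : ℝ) = cfA f k * (cfRS f k).2 - (cfRS f k).1 := by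
    exact_mod_cast cfRS_succ_fst f k
  have hmul : ((cfRS f (k + 1)).2 : ℝ) * (cfRS f k).2 = √f ^ 2 - (cfRS f (k + 1)).1 ^ 2 := by
    rw [Real.sq_sqrt (Nat.cast_nonneg _)]
    exact_mod_cast cfRS_snd_succ_mul hns k
  rw [cfCompleteQuot, cfCompleteQuot, inv_div]
  field_simp
  linear_combination (√f + (cfRS f (k + 1)).1 : ℝ) * hr' - hmul

theorem cfCompleteQuot_add_period {f p : ℕ} (hns : ¬ IsSquare f) (hp : CFIsPeriod f p) :
    cfCompleteQuot f (p + 1) = cfCompleteQuot f 1 := by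
  have hξ : ∀ k, cfCompleteQuot f (k + 1 + p) =
      cfA f (k + 1) + (cfCompleteQuot f (k + 1 + 1 + p))⁻¹ := fun k => by
    rw [show k + 1 + 1 + p = k + 1 + p + 1 by omega, ← hp.2 (k + 1) le_add_self]
    exact cfCompleteQuot_eq_add_inv hns _
  have hξgt : ∀ k, 1 < cfCompleteQuot f (k + 1 + 1 + p) := fun k => by
    rw [show k + 1 + 1 + p = k + 1 + p + 1 by omega]
    exact one_lt_cfCompleteQuot_succ hns _
  simpa only [zero_add, add_comm 1 p] using GenContFract.eq_of_eq_add_inv hξ hξgt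
    (fun k => cfCompleteQuot_eq_add_inv hns (k + 1))
    (fun k => one_lt_cfCompleteQuot_succ hns (k + 1))

theorem cfRS_eq_of_cfCompleteQuot_eq {f i j : ℕ} (hns : ¬ IsSquare f)
    (h : cfCompleteQuot f i = cfCompleteQuot f j) : cfRS f i = cfRS f j := by
  obtain ⟨hr, hs⟩ := (irrational_sqrt_natCast_iff.2 hns).eq_of_add_intCast_div_eq
    (cfRS_snd_pos hns i).ne' (cfRS_snd_pos hns j).ne' h
  exact Prod.ext hr hs

theorem stmt_14_general (f n : ℕ) (hns : ¬ IsSquare f)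
    (hper : CFPeriod f (n + 1)) (hend : cfA f (n + 1) = 2 * cfA f 0) :
    cfDen f (n + 2) * ((f : ℤ) - cfA f 0 ^ 2) = cfNum f (n + 1) + cfA f 0 * cfDen f (n + 1) := by
  have hrs : cfRS f (n + 2) = cfRS f 1 :=
    cfRS_eq_of_cfCompleteQuot_eq hns (cfCompleteQuot_add_period hns hper.1)
  obtain ⟨hr₂, hs₂⟩ := Prod.ext_iff.1 (hrs.trans (cfRS_one f))
  have hs₁ : (cfRS f (n + 1)).2 = 1 := by
    have h := cfRS_snd_succ_mul hns (n + 1)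
    rw [hr₂, hs₂] at h
    exact (mul_eq_left₀ (sub_pos.2 (natSqrt_sq_lt hns)).ne').1 h
  have hr₁ : (cfRS f (n + 1)).1 = Nat.sqrt f := by
    have h := cfRS_succ_fst f (n + 1)
    rw [hr₂, hs₁, hend, cfA_zero] at h
    linarith
  obtain ⟨hA, hB⟩ := cfNum_cfDen_succ hns (n + 1)
  rw [hr₁, hs₁] at hA hB
  rw [cfA_zero]
  linear_combination hB + (Nat.sqrt f : ℤ) * hA

theorem stmt_14 (f n : ℕ) (hf : 0 < f) (hns : ¬ IsSquare f)
    (hper : CFPeriod f (n + 1)) (hend : cfA f (n + 1) = 2 * cfA f 0) :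
    cfDen f (n + 2) * ((f : ℤ) - cfA f 0 ^ 2) = cfNum f (n + 1) + cfA f 0 * cfDen f (n + 1) :=
  stmt_14_general f n hns hper hend
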